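/- arXiv:math/0606089 — 7 statements merged into one kernel-verified Lean document; each statement's English description precedes it below -/
import Mathlib

section
/- For every positive integer l, the simplex S_n(l) = conv{e_1, ..., e_n, -l·(e_1+...+e_n)} contains exactly l lattice points of ℤⁿ in its interior, namely the points -j·(e_1+...+e_n) for j = 0, 1, ..., l-1. -/
/-!
The points `e_i` and `-t • 𝟙` form an affine basis of `ℝⁿ` as soon as `1 + n t ≠ 0`, with explicit
barycentric coordinates `w_∅(x) = (1 - ∑ x) / (1 + n t)` and `w_i(x) = x_i + t w_∅(x)`; the interior
of the simplex is where all of them are positive. For an integer point `z` with minimum `m` and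
`r = ∑ (z_i - m) ≥ 0`, positivity of `w_∅` gives `m ≤ 0`, and positivity of the coordinate at a
minimal index reads `0 < m + l (1 - r)`. Hence `r = 0`, so `z` is constant `m` with `-l < m ≤ 0`.
-/

open Finset

namespace LatticeSimplex

variable {n : ℕ} {t : ℝ}

def vertex (n : ℕ) (t : ℝ) : Option (Fin n) → Fin n → ℝ
  | none => fun _ => -t
  | some i => Pi.single i 1

lemma range_vertex :
    Set.range (vertex n t) = Set.range (fun i : Fin n => (Pi.single i 1 : Fin n → ℝ)) ∪
      {fun _ : Fin n => -t} := by
  rw [Option.range_eq, Set.insert_eq, Set.union_comm]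
  rfl

noncomputable def baryCoord (n : ℕ) (t : ℝ) (x : Fin n → ℝ) : Option (Fin n) → ℝ
  | none => (1 - ∑ i, x i) / (1 + n * t)
  | some i => x i + t * ((1 - ∑ i, x i) / (1 + n * t))

lemma sum_baryCoord (hD : 1 + n * t ≠ 0) (x : Fin n → ℝ) : ∑ o, baryCoord n t x o = 1 := by
  simp only [Fintype.sum_option, baryCoord, sum_add_distrib, sum_const, card_univ,
    Fintype.card_fin, nsmul_eq_mul]
  field_simp
  ring

lemma sum_baryCoord_smul_vertex (x : Fin n → ℝ) : ∑ o, baryCoord n t x o • vertex n t o = x := by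
  ext k
  simp only [baryCoord, vertex, Finset.sum_apply, Pi.smul_apply, smul_eq_mul, Fintype.sum_option,
    mul_neg, Pi.single_apply, mul_ite, mul_one, mul_zero, sum_ite_eq, mem_univ, ↓reduceIte]
  ring

lemma eq_baryCoord_of_sum_smul_vertex (hD : 1 + n * t ≠ 0) {w : Option (Fin n) → ℝ}
    (hw : ∑ o, w o = 1) : w = baryCoord n t (∑ o, w o • vertex n t o) := by
  set x := ∑ o, w o • vertex n t o
  have hx (k : Fin n) : x k = w (some k) - t * w none := by
    simp only [x, Fintype.sum_option, vertex, Pi.add_apply, Pi.smul_apply, smul_eq_mul, mul_neg,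
      Finset.sum_apply, Pi.single_apply, mul_ite, mul_one, mul_zero, sum_ite_eq, mem_univ,
      ↓reduceIte]
    ring
  have hnone : w none = (1 - ∑ k, x k) / (1 + n * t) := by
    rw [Fintype.sum_option] at hw
    rw [eq_div_iff hD, Fintype.sum_congr _ _ hx, sum_sub_distrib]
    simp only [sum_const, card_univ, Fintype.card_fin, nsmul_eq_mul]
    linear_combination hw
  ext (_ | k)
  · exact hnone
  · change w (some k) = x k + t * ((1 - ∑ i, x i) / (1 + n * t))
    rw [← hnone, hx]
    ring

lemma affineIndependent_vertex (hD : 1 + n * t ≠ 0) : AffineIndependent ℝ (vertex n t) := by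
  rw [affineIndependent_iff_eq_of_fintype_affineCombination_eq]
  intro w₁ w₂ hw₁ hw₂ h
  rw [univ.affineCombination_eq_linear_combination _ _ hw₁,
    univ.affineCombination_eq_linear_combination _ _ hw₂] at h
  rw [eq_baryCoord_of_sum_smul_vertex hD hw₁, eq_baryCoord_of_sum_smul_vertex hD hw₂, h]

lemma affineSpan_range_vertex (hD : 1 + n * t ≠ 0) :
    affineSpan ℝ (Set.range (vertex n t)) = ⊤ := by
  refine eq_top_iff.mpr fun x _ => ?_
  have hx := affineCombination_mem_affineSpan (sum_baryCoord hD x) (vertex n t)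
  rwa [univ.affineCombination_eq_linear_combination _ _ (sum_baryCoord hD x),
    sum_baryCoord_smul_vertex] at hx

noncomputable def vertexBasis (hD : 1 + n * t ≠ 0) : AffineBasis (Option (Fin n)) ℝ (Fin n → ℝ) :=
  ⟨vertex n t, affineIndependent_vertex hD, affineSpan_range_vertex hD⟩

@[simp]
lemma coe_vertexBasis (hD : 1 + n * t ≠ 0) : ⇑(vertexBasis hD) = vertex n t :=
  rfl

lemma vertexBasis_coord (hD : 1 + n * t ≠ 0) (o : Option (Fin n)) (x : Fin n → ℝ) :
    (vertexBasis hD).coord o x = baryCoord n t x o := by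
  have := (vertexBasis hD).coord_apply_combination_of_mem (mem_univ o) (sum_baryCoord hD x)
  rwa [univ.affineCombination_eq_linear_combination _ _ (sum_baryCoord hD x),
    coe_vertexBasis, sum_baryCoord_smul_vertex] at this

lemma interior_convexHull_range_vertex (hD : 1 + n * t ≠ 0) :
    interior (convexHull ℝ (Set.range (vertex n t))) = {x | ∀ o, 0 < baryCoord n t x o} := by
  simpa only [vertexBasis_coord, coe_vertexBasis] using (vertexBasis hD).interior_convexHull

lemma baryCoord_pos_iff (hD : 0 < 1 + n * t) (x : Fin n → ℝ) :
    (∀ o, 0 < baryCoord n t x o) ↔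
      ∑ i, x i < 1 ∧ ∀ i, 0 < (1 + n * t) * x i + t * (1 - ∑ j, x j) := by
  have hsome (i : Fin n) : baryCoord n t x (some i) =
      ((1 + n * t) * x i + t * (1 - ∑ j, x j)) / (1 + n * t) := by
    rw [baryCoord, mul_div_assoc', add_div' _ _ _ hD.ne', mul_comm]
  simp only [Option.forall, hsome, div_pos_iff_of_pos_right hD]
  simp only [baryCoord, div_pos_iff_of_pos_right hD, sub_pos]

lemma exists_lt_forall_eq_neg_of_pos (hn : 0 < n) (l : ℕ) (z : Fin n → ℤ)
    (hs : ∑ i, z i < 1) (h : ∀ i, 0 < (1 + (n : ℤ) * l) * z i + l * (1 - ∑ j, z j)) :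
    ∃ j : ℕ, j < l ∧ ∀ i, z i = -j := by
  have : Nonempty (Fin n) := ⟨⟨0, hn⟩⟩
  obtain ⟨i₀, hi₀⟩ := Finite.exists_min z
  set m := z i₀
  set r := ∑ i, (z i - m)
  have hr : 0 ≤ r := sum_nonneg fun i _ => sub_nonneg.mpr (hi₀ i)
  have hsum : ∑ i, z i = n * m + r := by
    simp only [r, sum_sub_distrib, sum_const, card_univ, Fintype.card_fin, nsmul_eq_mul]
    ring
  have hm : m ≤ 0 := by
    have : (0 : ℤ) < n := by exact_mod_cast hn
    nlinarith
  have hkey : 0 < m + l * (1 - r) := by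
    have := h i₀
    rw [hsum] at this
    linear_combination this
  have hr0 : r = 0 := by nlinarith
  have hconst : ∀ i, z i = m := fun i =>
    sub_eq_zero.mp <| (sum_eq_zero_iff_of_nonneg fun i _ => sub_nonneg.mpr (hi₀ i)).mp hr0 i
      (mem_univ i)
  rw [hr0, sub_zero, mul_one] at hkey
  refine ⟨(-m).toNat, by omega, fun i => by rw [hconst i]; omega⟩

lemma interior_lattice_points_eq (hn : 0 < n) (l : ℕ) :
    {x : Fin n → ℝ |
        x ∈ interior (convexHull ℝ (Set.range (vertex n l))) ∧ ∀ i, ∃ z : ℤ, x i = z} =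
      {x | ∃ j : ℕ, j < l ∧ x = fun _ => -(j : ℝ)} := by
  have hD : (0 : ℝ) < 1 + n * l := by positivity
  ext x
  simp only [interior_convexHull_range_vertex hD.ne', Set.mem_ofPred_eq, baryCoord_pos_iff hD]
  constructor
  · rintro ⟨⟨hs, hpos⟩, hz⟩
    choose z hz using hz
    obtain rfl : x = fun i => (z i : ℝ) := funext hz
    beta_reduce at hs hpos
    obtain ⟨j, hj, hzj⟩ := exists_lt_forall_eq_neg_of_pos hn l z (by exact_mod_cast hs)
      fun i => by exact_mod_cast hpos i
    exact ⟨j, hj, funext fun i => by simp [hzj]⟩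
  · rintro ⟨j, hj, rfl⟩
    have hj : (j : ℝ) < l := by exact_mod_cast hj
    refine ⟨⟨?_, fun i => ?_⟩, fun i => ⟨-j, by push_cast; rfl⟩⟩
    · simp only [sum_const, card_univ, Fintype.card_fin, nsmul_eq_mul]
      nlinarith [(n.cast_nonneg : (0 : ℝ) ≤ n), (j.cast_nonneg : (0 : ℝ) ≤ j)]
    · simp only [sum_const, card_univ, Fintype.card_fin, nsmul_eq_mul]
      linear_combination hj

lemma ncard_setOf_eq_neg_const (hn : 0 < n) (l : ℕ) :
    {x : Fin n → ℝ | ∃ j : ℕ, j < l ∧ x = fun _ => -(j : ℝ)}.ncard = l := by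
  have hrange : {x : Fin n → ℝ | ∃ j : ℕ, j < l ∧ x = fun _ => -(j : ℝ)} =
      Set.range fun j : Fin l => fun _ : Fin n => -(j : ℝ) := by
    ext x
    simp only [Set.mem_ofPred_eq, Set.mem_range]
    exact ⟨fun ⟨j, hj, hx⟩ => ⟨⟨j, hj⟩, hx.symm⟩, fun ⟨j, hx⟩ => ⟨j, j.isLt, hx.symm⟩⟩
  rw [hrange, Set.ncard_range_of_injective, Nat.card_eq_fintype_card, Fintype.card_fin]
  intro j₁ j₂ h
  simpa [Fin.ext_iff] using congrFun h ⟨0, hn⟩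

end LatticeSimplex

theorem interior_lattice_points_S_n_l_general (n l : ℕ) (hn : 1 ≤ n) :
    {x : Fin n → ℝ |
        x ∈ interior (convexHull ℝ
          (Set.range (fun i : Fin n => (Pi.single i 1 : Fin n → ℝ)) ∪
            {fun _ : Fin n => -(l : ℝ)})) ∧ ∀ i, ∃ z : ℤ, x i = z} =
      {x : Fin n → ℝ | ∃ j : ℕ, j < l ∧ x = fun _ => -(j : ℝ)} ∧
    Set.ncard {x : Fin n → ℝ |
        x ∈ interior (convexHull ℝ
          (Set.range (fun i : Fin n => (Pi.single i 1 : Fin n → ℝ)) ∪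
            {fun _ : Fin n => -(l : ℝ)})) ∧ ∀ i, ∃ z : ℤ, x i = z} = l := by
  rw [← LatticeSimplex.range_vertex, LatticeSimplex.interior_lattice_points_eq hn]
  exact ⟨rfl, LatticeSimplex.ncard_setOf_eq_neg_const hn l⟩

/-- `S_n(l)` contains exactly `l` interior lattice points, namely
`-j·(e_1+⋯+e_n)` for `j = 0,…,l-1`. -/
theorem interior_lattice_points_S_n_l (n l : ℕ) (hn : 1 ≤ n) (hl : 1 ≤ l) :
    {x : Fin n → ℝ |
        x ∈ interior (convexHull ℝ
          (Set.range (fun i : Fin n => (Pi.single i 1 : Fin n → ℝ)) ∪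
            {fun _ : Fin n => -(l : ℝ)})) ∧ ∀ i, ∃ z : ℤ, x i = z} =
      {x : Fin n → ℝ | ∃ j : ℕ, j < l ∧ x = fun _ => -(j : ℝ)} ∧
    Set.ncard {x : Fin n → ℝ |
        x ∈ interior (convexHull ℝ
          (Set.range (fun i : Fin n => (Pi.single i 1 : Fin n → ℝ)) ∪
            {fun _ : Fin n => -(l : ℝ)})) ∧ ∀ i, ∃ z : ℤ, x i = z} = l :=
  interior_lattice_points_S_n_l_general n l hn
end

section
/- Every complex root s of the polynomial p(s) = ∑_{i=0}^{n} C(s+n−i, n) (equivalently of C(s+n+1, n+1) − C(s, n+1)) has real part equal to −1/2. -/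
/-- The generalized binomial coefficient `C(y,m) = (1/m!)·∏_{j<m} (y-j)`. -/
noncomputable def genBinom (y : ℂ) (m : ℕ) : ℂ :=
  (∏ j ∈ Finset.range m, (y - j)) / (Nat.factorial m)

/-!
By Pascal's rule the sum telescopes to `C(s+n+1, n+1) - C(s, n+1)`, so a root `s` satisfies
`∏_{j ≤ n} (s - j) = ∏_{j ≤ n} (s + j + 1)`. Since
`‖s + t + 1‖² - ‖s - t‖² = (2 Re s + 1)(2t + 1)`, for `Re s > -1/2` every factor on the right
is strictly longer than the matching factor on the left, and for `Re s < -1/2` every factor is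
strictly shorter; either way the products cannot be equal.
-/

open Finset

theorem Finset.prod_lt_prod_of_nonempty_of_nonneg {ι : Type*} {s : Finset ι} {f g : ι → ℝ}
    (hs : s.Nonempty) (hf : ∀ i ∈ s, 0 ≤ f i) (hfg : ∀ i ∈ s, f i < g i) :
    ∏ i ∈ s, f i < ∏ i ∈ s, g i := by
  by_cases hpos : ∀ i ∈ s, 0 < f i
  · exact prod_lt_prod_of_nonempty hpos hfg hs
  · simp only [not_forall, not_lt] at hpos
    obtain ⟨i, hi, hfi⟩ := hpos
    rw [prod_eq_zero hi (le_antisymm hfi (hf i hi))]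
    exact prod_pos fun j hj => (hf j hj).trans_lt (hfg j hj)

namespace genBinom

theorem add_one_succ_sub (y : ℂ) (m : ℕ) :
    genBinom (y + 1) (m + 1) - genBinom y (m + 1) = genBinom y m := by
  have hshift : ∏ j ∈ range (m + 1), (y + 1 - j) = (∏ j ∈ range m, (y - j)) * (y + 1) := by
    rw [prod_range_succ']
    push_cast
    simp only [add_sub_add_right_eq_sub, sub_zero]
  have hm : ((m.factorial : ℂ)) ≠ 0 := Nat.cast_ne_zero.mpr m.factorial_ne_zero
  have hm1 : ((m : ℂ) + 1) ≠ 0 := Nat.cast_add_one_ne_zero m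
  simp only [genBinom, hshift, prod_range_succ, Nat.factorial_succ]
  push_cast
  field_simp
  ring

theorem sum_range_telescope (n : ℕ) (s : ℂ) :
    ∑ i ∈ range (n + 1), genBinom (s + n - i) n
      = genBinom (s + n + 1) (n + 1) - genBinom s (n + 1) := by
  have hterm : ∀ i ∈ range (n + 1), genBinom (s + n - i) n
      = genBinom (s + n + 1 - i) (n + 1) - genBinom (s + n + 1 - (i + 1 : ℕ)) (n + 1) := by
    intro i _
    rw [← add_one_succ_sub]
    push_cast
    ring_nf
  rw [sum_congr rfl hterm, sum_range_sub' (fun i => genBinom (s + n + 1 - i) (n + 1))]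
  push_cast
  ring_nf

theorem add_natCast_self (s : ℂ) (m : ℕ) :
    genBinom (s + m) m = (∏ j ∈ range m, (s + (j + 1))) / m.factorial := by
  rw [genBinom, ← prod_range_reflect]
  congr 1
  refine prod_congr rfl fun j hj => ?_
  rw [show m - 1 - j = m - (j + 1) by omega, Nat.cast_sub (by simp at hj; omega)]
  push_cast
  ring

end genBinom

namespace Complex

theorem norm_add_one_sq_sub_norm_sub_sq (s : ℂ) (t : ℝ) :
    ‖s + (t + 1)‖ ^ 2 - ‖s - t‖ ^ 2 = (2 * s.re + 1) * (2 * t + 1) := by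
  simp only [Complex.sq_norm, normSq_apply, add_re, add_im, sub_re, sub_im, ofReal_re, ofReal_im,
    one_re, one_im]
  ring

theorem norm_sub_lt_norm_add_one {s : ℂ} {t : ℝ} (hs : 0 < 2 * s.re + 1) (ht : 0 < 2 * t + 1) :
    ‖s - t‖ < ‖s + (t + 1)‖ := by
  have hsq := norm_add_one_sq_sub_norm_sub_sq s t
  have : ‖s - t‖ ^ 2 < ‖s + (t + 1)‖ ^ 2 := by nlinarith [mul_pos hs ht]
  exact lt_of_pow_lt_pow_left₀ 2 (norm_nonneg _) this

theorem prod_norm_sub_lt_prod_norm_add_one {s : ℂ} {m : ℕ} (hm : 0 < m)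
    (hs : 0 < 2 * s.re + 1) :
    ∏ j ∈ range m, ‖s - j‖ < ∏ j ∈ range m, ‖s + (j + 1)‖ :=
  prod_lt_prod_of_nonempty_of_nonneg (nonempty_range_iff.mpr hm.ne')
    (fun _ _ => norm_nonneg _)
    (fun j _ => by exact_mod_cast norm_sub_lt_norm_add_one (t := j) hs (by positivity))

/-- The reflection `s ↦ -1 - s` swaps the two products and the sign of `2 Re s + 1`. -/
theorem re_eq_neg_half_of_prod_norm_eq {s : ℂ} {m : ℕ} (hm : 0 < m)
    (h : ∏ j ∈ range m, ‖s - j‖ = ∏ j ∈ range m, ‖s + (j + 1)‖) :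
    s.re = -1 / 2 := by
  rcases lt_trichotomy (2 * s.re + 1) 0 with hneg | hzero | hpos
  · have hrefl : 0 < 2 * (-1 - s).re + 1 := by simp; linarith
    have := prod_norm_sub_lt_prod_norm_add_one hm hrefl
    have hswap : ∀ j : ℕ, ‖-1 - s - j‖ = ‖s + (j + 1)‖ ∧ ‖-1 - s + (j + 1)‖ = ‖s - j‖ :=
      fun j => ⟨by rw [← norm_neg]; ring_nf, by rw [← norm_neg]; ring_nf⟩
    simp only [hswap] at this
    exact absurd h this.ne'
  · linarith
  · exact absurd h (prod_norm_sub_lt_prod_norm_add_one hm hpos).ne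

end Complex

theorem roots_S_n_one_re_general (n : ℕ) (s : ℂ)
    (hs : ∑ i ∈ Finset.range (n + 1), genBinom (s + n - i) n = 0) :
    s.re = -1/2 := by
  rw [genBinom.sum_range_telescope, sub_eq_zero] at hs
  have hprod : ∏ j ∈ range (n + 1), (s + (j + 1)) = ∏ j ∈ range (n + 1), (s - j) := by
    have hfac : ((n + 1).factorial : ℂ) ≠ 0 := Nat.cast_ne_zero.mpr (Nat.factorial_ne_zero _)
    have := genBinom.add_natCast_self s (n + 1)
    push_cast at this
    rw [← add_assoc, hs, genBinom] at this
    exact ((div_left_inj' hfac).mp this).symm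
  apply Complex.re_eq_neg_half_of_prod_norm_eq n.succ_pos
  simp only [← norm_prod, hprod]

/-- Every complex root of `p(s) = ∑_{i=0}^{n} C(s+n-i, n)` has real part `-1/2`. -/
theorem roots_S_n_one_re (n : ℕ) (hn : 1 ≤ n) (s : ℂ)
    (hs : ∑ i ∈ Finset.range (n + 1), genBinom (s + n - i) n = 0) :
    s.re = -1/2 :=
  roots_S_n_one_re_general n s hs
end

section
/- Let b > 0 be real and n ≥ 1. The complex number −1/2 + ib is a root of the polynomial C(s+n+1, n+1) − C(s, n+1) if and only if ∑_{m=0}^{n} arccot(2b/(2m+1)) is an integer multiple of π, where arccot takes values in (0, π/2]. -/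
open Real

/-!
In rising factorials, `C(s+N, N) = (s+1)^(N)/N!` and `C(s, N) = (-1)^N (-s)^(N)/N!`, and on the
line `Re s = -1/2` we have `-s = conj (s+1)`. So `s` is a root iff `A = (-1)^N conj A` for
`A = (s+1)^(N) = ∏_{m<N} (s+1+m)`. For `s = -1/2 + ib` each factor is `ib · conj (1 + t_m i)` with
`t_m = (2m+1)/(2b)`, so the condition says that
`∏ (1 + t_m i) = (∏ √(1 + t_m²)) · exp (i ∑ arctan t_m)` is real.
-/

open Complex Polynomial Finset ComplexConjugate

theorem ascPochhammer_eval_eq_prod_range {R : Type*} [CommSemiring R] (n : ℕ) (r : R) :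
    (ascPochhammer R n).eval r = ∏ j ∈ range n, (r + j) := by
  induction n with
  | zero => simp
  | succ n ih => simp [ascPochhammer_succ_right, ih, prod_range_succ]

theorem ascPochhammer_eval_conj (n : ℕ) (z : ℂ) :
    (ascPochhammer ℂ n).eval (conj z) = conj ((ascPochhammer ℂ n).eval z) := by
  rw [← eval_map_apply, ascPochhammer_map]

theorem genBinom_eq_descPochhammer_eval_div (y : ℂ) (m : ℕ) :
    genBinom y m = (descPochhammer ℂ m).eval y / m.factorial := by
  rw [genBinom, descPochhammer_eval_eq_prod_range]

theorem genBinom_add_sub_eq_zero_iff (y : ℂ) (m : ℕ) :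
    genBinom (y + m) m - genBinom y m = 0 ↔
      (ascPochhammer ℂ m).eval (y + 1) = (-1) ^ m * (ascPochhammer ℂ m).eval (-y) := by
  have hsign : ((-1 : ℂ) ^ m) * (-1) ^ m = 1 := by rw [← mul_pow]; simp
  rw [sub_eq_zero, genBinom_eq_descPochhammer_eval_div, genBinom_eq_descPochhammer_eval_div,
    div_left_inj' (Nat.cast_ne_zero.mpr m.factorial_ne_zero), descPochhammer_eval_eq_ascPochhammer,
    ascPochhammer_eval_neg_eq_descPochhammer, ← mul_assoc, hsign, one_mul, add_sub_cancel_right]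

theorem eq_neg_one_pow_mul_conj_iff {c w : ℂ} (m : ℕ) (hc : conj c = -c) (hc₀ : c ≠ 0) :
    c ^ m * conj w = (-1) ^ m * conj (c ^ m * conj w) ↔ conj w = w := by
  rw [map_mul, map_pow, hc, conj_conj, ← mul_assoc, ← mul_pow, neg_one_mul, neg_neg,
    mul_right_inj' (pow_ne_zero m hc₀)]

theorem one_add_mul_I_eq (t : ℝ) : (1 + t * I : ℂ) = √(1 + t ^ 2) * exp (Real.arctan t * I) := by
  have hsqrt : (√(1 + t ^ 2) : ℂ) ≠ 0 := ofReal_ne_zero.mpr (by positivity)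
  rw [exp_mul_I, ← ofReal_cos, ← ofReal_sin, cos_arctan, sin_arctan]
  push_cast
  field_simp

theorem im_prod_one_add_mul_I_eq_zero_iff {ι : Type*} (s : Finset ι) (t : ι → ℝ) :
    (∏ i ∈ s, (1 + t i * I)).im = 0 ↔ ∃ k : ℤ, ∑ i ∈ s, Real.arctan (t i) = k * π := by
  have hprod : ∏ i ∈ s, (1 + t i * I) =
      (∏ i ∈ s, √(1 + t i ^ 2) : ℝ) * exp ((∑ i ∈ s, Real.arctan (t i) : ℝ) * I) := by
    simp_rw [one_add_mul_I_eq, prod_mul_distrib, ← Complex.exp_sum, ofReal_prod, ofReal_sum,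
      sum_mul]
  have hpos : 0 < ∏ i ∈ s, √(1 + t i ^ 2) := prod_pos fun i _ => by positivity
  rw [hprod, im_ofReal_mul, exp_ofReal_mul_I_im, mul_eq_zero_iff_left hpos.ne',
    Real.sin_eq_zero_iff]
  simp_rw [eq_comm]

theorem root_iff_arccot_sum_general (n : ℕ) (b : ℝ) (hb : 0 < b) :
    genBinom ((-1/2 + b * Complex.I) + n + 1) (n + 1) -
        genBinom (-1/2 + b * Complex.I) (n + 1) = 0 ↔
      ∃ k : ℤ, ∑ m ∈ Finset.range (n + 1),
          Real.arctan ((2 * m + 1) / (2 * b)) = k * Real.pi := by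
  set s : ℂ := -1/2 + b * I
  have hb₀ : (b : ℂ) ≠ 0 := ofReal_ne_zero.mpr hb.ne'
  have hneg : -s = conj (s + 1) := by
    simp only [s, map_add, map_div₀, map_neg, map_one, map_ofNat, map_mul, conj_ofReal, conj_I]
    ring
  have hfactor : ∀ m : ℕ, s + 1 + m = b * I * conj (1 + ((2 * m + 1) / (2 * b) : ℝ) * I) := by
    intro m
    simp only [s, map_add, map_one, map_mul, conj_ofReal, conj_I]
    push_cast
    field_simp
    linear_combination (2 * m + 1 : ℂ) * I_sq
  rw [show s + n + 1 = s + ↑(n + 1) by push_cast; ring, genBinom_add_sub_eq_zero_iff, hneg,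
    ascPochhammer_eval_conj, ascPochhammer_eval_eq_prod_range, prod_congr rfl fun m _ => hfactor m,
    prod_mul_distrib, prod_const, card_range, ← map_prod,
    eq_neg_one_pow_mul_conj_iff _ (by simp) (mul_ne_zero hb₀ I_ne_zero), conj_eq_iff_im,
    im_prod_one_add_mul_I_eq_zero_iff]

/-- For `b > 0`, `-1/2 + ib` is a root of `C(s+n+1,n+1) − C(s,n+1)` iff
`∑_{m=0}^{n} arccot(2b/(2m+1))` is an integer multiple of `π`, where
`arccot(t) = arctan(1/t)` for `t > 0`. -/
theorem root_iff_arccot_sum (n : ℕ) (hn : 1 ≤ n) (b : ℝ) (hb : 0 < b) :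
    genBinom ((-1/2 + b * Complex.I) + n + 1) (n + 1) -
        genBinom (-1/2 + b * Complex.I) (n + 1) = 0 ↔
      ∃ k : ℤ, ∑ m ∈ Finset.range (n + 1),
          Real.arctan ((2 * m + 1) / (2 * b)) = k * Real.pi :=
  root_iff_arccot_sum_general n b hb
end

section
/- Let v > 0 be real. All complex roots of the cubic polynomial s³ + (3/2)s² + (1/2 + 2/v)s + 1/v have real part −1/2 if and only if v ≤ 8. Moreover the cubic factors as (s + 1/2)(s² + s + 2/v). -/
/-- For real `v > 0`, all complex roots of
`s³ + (3/2)s² + (1/2 + 2/v)s + 1/v` have real part `-1/2` iff `v ≤ 8`;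
moreover the cubic factors as `(s + 1/2)(s² + s + 2/v)`. -/
theorem cubic_reflexive_roots (v : ℝ) (hv : 0 < v) :
    ((∀ s : ℂ, s ^ 3 + (3/2) * s ^ 2 + (1/2 + 2/(v : ℂ)) * s + 1/(v : ℂ) = 0 →
        s.re = -1/2) ↔ v ≤ 8) ∧
    (∀ s : ℂ, s ^ 3 + (3/2) * s ^ 2 + (1/2 + 2/(v : ℂ)) * s + 1/(v : ℂ) =
        (s + 1/2) * (s ^ 2 + s + 2/(v : ℂ))) := by
  have hvne : v ≠ 0 := hv.ne'
  have hfac : ∀ s : ℂ, s ^ 3 + (3/2) * s ^ 2 + (1/2 + 2/(v : ℂ)) * s + 1/(v : ℂ) =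
      (s + 1/2) * (s ^ 2 + s + 2/(v : ℂ)) := by intro s; ring
  refine ⟨⟨?_, ?_⟩, hfac⟩
  · intro h
    by_contra hlt
    push_neg at hlt
    set d := Real.sqrt (1 - 8/v) with hd
    have hpos : (0:ℝ) < 1 - 8/v := by
      have := (div_lt_one hv).2 hlt
      linarith
    have hdpos : 0 < d := Real.sqrt_pos.2 hpos
    have hd2 : d ^ 2 = 1 - 8/v := Real.sq_sqrt hpos.le
    have hvd : v * d^2 = v - 8 := by
      rw [hd2]; field_simp
    have hxeq : ((-1+d)/2 : ℝ)^2 + ((-1+d)/2) + 2/v = 0 := by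
      field_simp
      nlinarith [hvd]
    have hz : (((-1+d)/2 : ℝ):ℂ)^2 + (((-1+d)/2:ℝ):ℂ) + 2/(v:ℂ) = 0 := by
      exact_mod_cast hxeq
    have hre := h (((-1+d)/2 : ℝ):ℂ) (by rw [hfac, hz, mul_zero])
    simp only [Complex.ofReal_re] at hre
    linarith
  · intro hv8 s hs
    rw [hfac] at hs
    rcases mul_eq_zero.1 hs with h1 | h2
    · have : s = -(1/2) := by linear_combination h1
      rw [this]
      norm_num
    · have h2' : s^2 + s + ((2/v:ℝ):ℂ) = 0 := by push_cast; exact h2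
      rw [Complex.ext_iff] at h2'
      simp only [pow_two, Complex.add_re, Complex.add_im, Complex.mul_re, Complex.mul_im,
        Complex.ofReal_re, Complex.ofReal_im, Complex.zero_re, Complex.zero_im] at h2'
      obtain ⟨hre, him⟩ := h2'
      have him' : s.im * (2 * s.re + 1) = 0 := by linarith [him]; 
      rcases mul_eq_zero.1 him' with hy | hx
      · rw [hy] at hre
        have h24 : (1/4:ℝ) ≤ 2/v := by
          rw [div_le_div_iff₀ (by norm_num) hv]
          linarith
        have hsq : (s.re + 1/2)^2 = 0 := by
          refine le_antisymm ?_ (sq_nonneg _)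
          nlinarith
        have : s.re + 1/2 = 0 := by
          exact pow_eq_zero_iff (by norm_num) |>.1 hsq
        linarith
      · linarith
end

section
/- Let μ and β be real with β > 0. All four complex roots of s⁴ + 2s³ + (2μ+1)s² + 2μ·s + β have real part −1/2 if and only if μ² ≥ β and μ − √(μ² − β) ≥ 1/4. Moreover the quartic factors as (s² + s + μ + √(μ²−β))(s² + s + μ − √(μ²−β)) whenever μ² ≥ β. -/
lemma aux_re (c : ℝ) (hc : 1/4 ≤ c) (s : ℂ) (h : s ^ 2 + s + (c : ℂ) = 0) :
    s.re = -1/2 := by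
  rw [Complex.ext_iff] at h
  obtain ⟨h1, h2⟩ := h
  simp [pow_two, Complex.mul_re, Complex.mul_im, Complex.add_re, Complex.add_im] at h1 h2
  rcases mul_eq_zero.mp (show s.im * (2 * s.re + 1) = 0 by ring_nf; linarith [h2]) with hy | hx
  · have : (2 * s.re + 1) ^ 2 = 0 := by nlinarith
    have := pow_eq_zero_iff (n := 2) (by norm_num) |>.mp this
    linarith
  · linarith

/-- For real `μ`, `β` with `β > 0`, all roots of
`s⁴ + 2s³ + (2μ+1)s² + 2μs + β` have real part `-1/2` iff
`μ² ≥ β` and `μ − √(μ²−β) ≥ 1/4`; moreover if `μ² ≥ β` the quartic factors as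
`(s² + s + μ + √(μ²−β))(s² + s + μ − √(μ²−β))`. -/
theorem quartic_reflexive_roots (μ β : ℝ) (hβ : 0 < β) :
    ((∀ s : ℂ, s ^ 4 + 2 * s ^ 3 + (2 * (μ : ℂ) + 1) * s ^ 2 + 2 * (μ : ℂ) * s +
          (β : ℂ) = 0 → s.re = -1/2) ↔
      β ≤ μ ^ 2 ∧ 1/4 ≤ μ - Real.sqrt (μ ^ 2 - β)) ∧
    (β ≤ μ ^ 2 →
      ∀ s : ℂ, s ^ 4 + 2 * s ^ 3 + (2 * (μ : ℂ) + 1) * s ^ 2 + 2 * (μ : ℂ) * s +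
          (β : ℂ) =
        (s ^ 2 + s + (μ : ℂ) + (Real.sqrt (μ ^ 2 - β) : ℂ)) *
          (s ^ 2 + s + (μ : ℂ) - (Real.sqrt (μ ^ 2 - β) : ℂ))) := by
  have factor : β ≤ μ ^ 2 →
      ∀ s : ℂ, s ^ 4 + 2 * s ^ 3 + (2 * (μ : ℂ) + 1) * s ^ 2 + 2 * (μ : ℂ) * s +
          (β : ℂ) =
        (s ^ 2 + s + (μ : ℂ) + (Real.sqrt (μ ^ 2 - β) : ℂ)) *
          (s ^ 2 + s + (μ : ℂ) - (Real.sqrt (μ ^ 2 - β) : ℂ)) := by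
    intro h1 s
    have hd : ((Real.sqrt (μ ^ 2 - β) : ℝ) : ℂ) ^ 2 = (μ : ℂ) ^ 2 - (β : ℂ) := by
      rw [← Complex.ofReal_pow, Real.sq_sqrt (show (0:ℝ) ≤ μ ^ 2 - β by linarith)]
      push_cast; ring
    linear_combination hd
  refine ⟨⟨fun H => ?_, fun ⟨h1, h2⟩ s hs => ?_⟩, factor⟩
  · -- forward direction
    have h1 : β ≤ μ ^ 2 := by
      by_contra hcon
      push_neg at hcon
      set c : ℝ := Real.sqrt (β - μ ^ 2) with hcdef
      have hc0 : 0 < c := Real.sqrt_pos.mpr (by linarith)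
      have hc2 : c ^ 2 = β - μ ^ 2 := Real.sq_sqrt (by linarith)
      set t : ℂ := -(μ : ℂ) + (c : ℂ) * Complex.I with htdef
      have hcc : ((c:ℝ):ℂ) ^ 2 = (β : ℂ) - (μ:ℂ) ^ 2 := by
        rw [← Complex.ofReal_pow, hc2]; push_cast; ring
      have ht : t ^ 2 + 2 * (μ : ℂ) * t + (β : ℂ) = 0 := by
        rw [htdef]
        linear_combination (-1 : ℂ) * hcc + ((c:ℝ):ℂ) ^ 2 * Complex.I_sq
      obtain ⟨w, hw⟩ := IsAlgClosed.exists_pow_nat_eq (1 + 4 * t) (n := 2) (by norm_num)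
      set s : ℂ := (-1 + w) / 2 with hsdef
      have hroot : s ^ 4 + 2 * s ^ 3 + (2 * (μ : ℂ) + 1) * s ^ 2 + 2 * (μ : ℂ) * s +
          (β : ℂ) = 0 := by
        have hst : s ^ 2 + s = t := by rw [hsdef]; linear_combination hw / 4
        calc s ^ 4 + 2 * s ^ 3 + (2 * (μ : ℂ) + 1) * s ^ 2 + 2 * (μ : ℂ) * s + (β : ℂ)
            = (s ^ 2 + s) ^ 2 + 2 * (μ:ℂ) * (s ^ 2 + s) + (β:ℂ) := by ring
          _ = t ^ 2 + 2 * (μ:ℂ) * t + (β:ℂ) := by rw [hst]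
          _ = 0 := ht
      have hre := H s hroot
      have hwre : w.re = 0 := by
        have : s.re = (-1 + w.re) / 2 := by
          rw [hsdef]; simp [Complex.div_re, Complex.add_re]
        rw [this] at hre; linarith
      have him := congrArg Complex.im hw
      have : (w ^ 2).im = 2 * w.re * w.im := by
        simp [pow_two, Complex.mul_im]; ring
      rw [this, hwre] at him
      simp [htdef, Complex.add_im, Complex.mul_im] at him
      -- him should say 0 = 4 * c or similar
      nlinarith [him]
    refine ⟨h1, ?_⟩
    by_contra hcon
    push_neg at hcon
    set d : ℝ := Real.sqrt (μ ^ 2 - β) with hddef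
    have hd2 : d ^ 2 = μ ^ 2 - β := Real.sq_sqrt (by linarith)
    have ht0 : (-1:ℝ)/4 < -μ + d := by linarith
    set r : ℝ := Real.sqrt (1 + 4 * (-μ + d)) with hrdef
    have hr0 : 0 < r := Real.sqrt_pos.mpr (by linarith)
    have hr2 : r ^ 2 = 1 + 4 * (-μ + d) := Real.sq_sqrt (by linarith)
    set s : ℂ := (((-1 + r) / 2 : ℝ) : ℂ) with hsdef
    have hroot : s ^ 4 + 2 * s ^ 3 + (2 * (μ : ℂ) + 1) * s ^ 2 + 2 * (μ : ℂ) * s +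
        (β : ℂ) = 0 := by
      have key : ((-1 + r) / 2 : ℝ) ^ 4 + 2 * ((-1 + r) / 2) ^ 3 + (2 * μ + 1) * ((-1 + r) / 2) ^ 2
          + 2 * μ * ((-1 + r) / 2) + β = 0 := by
        linear_combination (((r ^ 2 - 1) / 4 - μ + d) / 4 + μ / 2) * hr2 + hd2
      rw [hsdef]
      exact_mod_cast congrArg (Complex.ofReal) key
    have hre := H s hroot
    rw [hsdef] at hre
    simp [Complex.ofReal_re] at hre
    linarith
  · -- backward direction
    set d : ℝ := Real.sqrt (μ ^ 2 - β) with hddef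
    have hd0 : 0 ≤ d := Real.sqrt_nonneg _
    rw [factor h1 s] at hs
    rcases mul_eq_zero.mp hs with h | h
    · exact aux_re (μ + d) (by linarith) s (by push_cast; linear_combination h)
    · exact aux_re (μ - d) (by linarith) s (by push_cast; linear_combination h)
end

section
/- Let g₃ > 0, g₂, g₁ be real numbers with g₃ − g₂ + g₁ − 1 = 0 (i.e. −1 is a root of p(s) = g₃s³ + g₂s² + g₁s + 1). Then p factors as g₃(s+1)(s² + ((g₂−g₃)/g₃)s + 1/g₃), and if the quadratic factor has non-real roots a ± ib, then (a + 1/g₂)² + b² = (1/g₂)² + 1/g₂ (assuming g₂ ≠ 0). -/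
/-!
Since `-1` is a root, `g₁ = 1 + g₂ - g₃` and `p` factors. For a real monic quadratic
`s² + c s + d` with a non-real root `a + ib`, comparing imaginary and real parts gives
`c = -2a` and `d = a² + b²`. With `c = (g₂ - g₃)/g₃` and `d = 1/g₃` this says
`g₂ = g₃(1 - 2a)` and `a² + b² = 1/g₃`, which is exactly the circle equation after
expanding `(a + 1/g₂)²`.
-/

open Complex

theorem cubic_eq_mul_quadratic_of_eval_neg_one {K : Type*} [Field K] {g₃ g₂ g₁ : K}
    (hg₃ : g₃ ≠ 0) (hroot : g₃ - g₂ + g₁ - 1 = 0) (s : K) :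
    g₃ * s ^ 3 + g₂ * s ^ 2 + g₁ * s + 1 =
      g₃ * (s + 1) * (s ^ 2 + (g₂ - g₃) / g₃ * s + 1 / g₃) := by
  obtain rfl : g₁ = 1 + g₂ - g₃ := by linear_combination hroot
  field_simp
  ring

theorem neg_two_mul_re_and_normSq_of_quadratic_root {c d a b : ℝ} (hb : b ≠ 0)
    (h : ((a : ℂ) + b * I) ^ 2 + c * ((a : ℂ) + b * I) + d = 0) :
    c = -2 * a ∧ d = a ^ 2 + b ^ 2 := by
  have hre : a ^ 2 - b ^ 2 + c * a + d = 0 := by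
    simpa [sq] using congrArg Complex.re h
  have him : b * (2 * a + c) = 0 := by
    have := congrArg Complex.im h
    simp [sq] at this
    linear_combination this
  have hc : c = -2 * a := by
    linear_combination (mul_eq_zero.mp him).resolve_left hb
  exact ⟨hc, by linear_combination hre - a * hc⟩

theorem add_inv_sq_add_sq_eq {g₃ g₂ a b : ℝ} (hg₃ : g₃ ≠ 0) (hg₂ : g₂ ≠ 0)
    (hsum : (g₂ - g₃) / g₃ = -2 * a) (hprod : 1 / g₃ = a ^ 2 + b ^ 2) :
    (a + 1 / g₂) ^ 2 + b ^ 2 = (1 / g₂) ^ 2 + 1 / g₂ := by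
  have hg₂_eq : g₂ = g₃ * (1 - 2 * a) := by
    field_simp at hsum
    linear_combination hsum
  calc (a + 1 / g₂) ^ 2 + b ^ 2 = 1 / g₃ + 2 * a / g₂ + (1 / g₂) ^ 2 := by
        rw [hprod]; ring
    _ = (1 / g₂) ^ 2 + 1 / g₂ := by
        have h₁ : 1 - 2 * a ≠ 0 := right_ne_zero_of_mul (hg₂_eq ▸ hg₂)
        rw [hg₂_eq]
        field_simp
        ring

/-- If `-1` is a root of `p(s) = g₃s³ + g₂s² + g₁s + 1` (`g₃ > 0`), then `p`
factors as `g₃(s+1)(s² + ((g₂−g₃)/g₃)s + 1/g₃)`, and if the quadratic factor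
has non-real roots `a ± ib`, then `(a + 1/g₂)² + b² = (1/g₂)² + 1/g₂`. -/
theorem cubic_no_interior_points (g₃ g₂ g₁ : ℝ) (hg₃ : 0 < g₃) (hg₂ : g₂ ≠ 0)
    (hroot : g₃ - g₂ + g₁ - 1 = 0) :
    (∀ s : ℂ, (g₃ : ℂ) * s ^ 3 + (g₂ : ℂ) * s ^ 2 + (g₁ : ℂ) * s + 1 =
        (g₃ : ℂ) * (s + 1) *
          (s ^ 2 + (((g₂ - g₃) / g₃ : ℝ) : ℂ) * s + 1 / (g₃ : ℂ))) ∧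
    (∀ a b : ℝ, b ≠ 0 →
      ((a : ℂ) + (b : ℂ) * Complex.I) ^ 2 +
          (((g₂ - g₃) / g₃ : ℝ) : ℂ) * ((a : ℂ) + (b : ℂ) * Complex.I) +
          1 / (g₃ : ℂ) = 0 →
      (a + 1 / g₂) ^ 2 + b ^ 2 = (1 / g₂) ^ 2 + 1 / g₂) := by
  refine ⟨fun s => ?_, fun a b hb hquad => ?_⟩
  · push_cast
    exact cubic_eq_mul_quadratic_of_eval_neg_one (by exact_mod_cast hg₃.ne')
      (by exact_mod_cast hroot) s
  · have hquad' : ((a : ℂ) + b * I) ^ 2 + (((g₂ - g₃) / g₃ : ℝ) : ℂ) * ((a : ℂ) + b * I)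
        + ((1 / g₃ : ℝ) : ℂ) = 0 := by
      simpa using hquad
    obtain ⟨hsum, hprod⟩ := neg_two_mul_re_and_normSq_of_quadratic_root hb hquad'
    exact add_inv_sq_add_sq_eq hg₃.ne' hg₂ hsum hprod
end

section
/- The Reeve simplex T(k) = conv{0, e_1, e_2, (1,1,k)} ⊂ ℝ³ has volume k/6 and contains no lattice points of ℤ³ other than its four vertices; in particular it has no interior lattice points. -/
open MeasureTheory Set

/-!
The linear map `x ↦ (k x₀ - x₂, k x₁ - x₂, x₂)`, of determinant `k²`, carries `T(k)` onto the
corner simplex `{y ≥ 0, y₀ + y₁ + y₂ ≤ k}`. Slicing along the first coordinate shows that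
`{y ∈ ℝⁿ : y ≥ 0, ∑ yᵢ ≤ r}` has volume `rⁿ / n!`, so `T(k)` has volume `(k³ / 6) / k² = k / 6`.
The same inequalities confine `T(k)` to `0 ≤ x₀, x₁ ≤ 1`; once `x₀, x₁ ∈ {0, 1}` they pin down `x₂`,
leaving only the vertices. Each vertex lies on one of the supporting planes `x₂ = 0` and
`k (x₀ + x₁) - x₂ = k`, hence is not interior.
-/

def cornerSimplex (n : ℕ) (r : ℝ) : Set (Fin n → ℝ) :=
  {x | (∀ i, 0 ≤ x i) ∧ ∑ i, x i ≤ r}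

namespace cornerSimplex

variable {n : ℕ} {r : ℝ}

theorem eq_empty_of_neg (hr : r < 0) : cornerSimplex n r = ∅ :=
  eq_empty_of_forall_notMem fun _ ⟨hx, hsum⟩ =>
    (Finset.sum_nonneg fun i _ => hx i).not_gt (hsum.trans_lt hr)

theorem isClosed : IsClosed (cornerSimplex n r) := by
  simp only [cornerSimplex, ofPred_and, ofPred_forall]
  exact (isClosed_iInter fun i => isClosed_le continuous_const (continuous_apply i)).inter
    (isClosed_le (by fun_prop) continuous_const)

theorem convex : Convex ℝ (cornerSimplex n r) := by
  rintro x ⟨hx, hsx⟩ y ⟨hy, hsy⟩ a b ha hb hab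
  refine ⟨fun i => add_nonneg (mul_nonneg ha (hx i)) (mul_nonneg hb (hy i)), ?_⟩
  simp only [Pi.add_apply, Pi.smul_apply, smul_eq_mul, Finset.sum_add_distrib, ← Finset.mul_sum]
  calc a * ∑ i, x i + b * ∑ i, y i ≤ a * r + b * r := by gcongr
    _ = r := by rw [← add_mul, hab, one_mul]

theorem cons_mem_iff {t : ℝ} {y : Fin n → ℝ} :
    (Fin.cons t y : Fin (n + 1) → ℝ) ∈ cornerSimplex (n + 1) r ↔
      0 ≤ t ∧ y ∈ cornerSimplex n (r - t) := by
  simp only [cornerSimplex, mem_ofPred_eq, Fin.forall_fin_succ, Fin.sum_univ_succ, Fin.cons_zero,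
    Fin.cons_succ, le_sub_iff_add_le']
  tauto

end cornerSimplex

theorem lintegral_Icc_sub_pow_div_factorial (n : ℕ) {r : ℝ} (hr : 0 ≤ r) :
    ∫⁻ t in Icc 0 r, ENNReal.ofReal ((r - t) ^ n / n.factorial) =
      ENNReal.ofReal (r ^ (n + 1) / (n + 1).factorial) := by
  rw [← ofReal_integral_eq_lintegral_ofReal]
  · rw [integral_Icc_eq_integral_Ioc, ← intervalIntegral.integral_of_le hr,
      intervalIntegral.integral_div,
      intervalIntegral.integral_comp_sub_left (fun t => t ^ n), sub_self, sub_zero, integral_pow,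
      zero_pow n.succ_ne_zero, sub_zero, div_div, Nat.factorial_succ]
    push_cast
    rfl
  · exact (by fun_prop : Continuous fun t : ℝ => (r - t) ^ n / n.factorial).integrableOn_Icc
  · exact (ae_restrict_iff' measurableSet_Icc).2
      (ae_of_all _ fun t ht => by have := sub_nonneg.2 ht.2; positivity)

theorem volume_cornerSimplex (n : ℕ) {r : ℝ} (hr : 0 ≤ r) :
    volume (cornerSimplex n r) = ENNReal.ofReal (r ^ n / n.factorial) := by
  induction n generalizing r with
  | zero =>
    have : cornerSimplex 0 r = univ := by ext x; simp [cornerSimplex, hr]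
    simp [this, volume_pi]
  | succ n ih =>
    let e := MeasurableEquiv.piFinSuccAbove (fun _ : Fin (n + 1) => ℝ) 0
    have he := (volume_preserving_piFinSuccAbove (fun _ : Fin (n + 1) => ℝ) 0).symm e
    have slice (t : ℝ) : volume (Prod.mk t ⁻¹' (e.symm ⁻¹' cornerSimplex (n + 1) r)) =
        (Icc 0 r).indicator (fun t => ENNReal.ofReal ((r - t) ^ n / n.factorial)) t := by
      have hslice : Prod.mk t ⁻¹' (e.symm ⁻¹' cornerSimplex (n + 1) r) =
          {y | 0 ≤ t ∧ y ∈ cornerSimplex n (r - t)} := by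
        ext y
        change Fin.insertNth (α := fun _ => ℝ) 0 t y ∈ cornerSimplex (n + 1) r ↔ _
        rw [Fin.insertNth_zero', cornerSimplex.cons_mem_iff, mem_ofPred_eq]
      rw [hslice]
      by_cases ht : t ∈ Icc 0 r
      · rw [indicator_of_mem ht, ← ih (sub_nonneg.2 ht.2)]
        simp [ht.1]
      · rw [indicator_of_notMem ht]
        rcases not_and_or.1 ht with ht | ht
        · simp [ht]
        · simp [cornerSimplex.eq_empty_of_neg (sub_neg.2 (not_le.1 ht))]
    have hmeas : MeasurableSet (e.symm ⁻¹' cornerSimplex (n + 1) r) :=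
      e.symm.measurable cornerSimplex.isClosed.measurableSet
    rw [← he.measure_preimage_equiv, Measure.volume_eq_prod, Measure.prod_apply hmeas,
      lintegral_congr slice, lintegral_indicator measurableSet_Icc,
      lintegral_Icc_sub_pow_div_factorial n hr]

theorem lt_of_mem_interior_of_forall_le {E : Type*} [AddCommGroup E] [TopologicalSpace E]
    [ContinuousAdd E] [Module ℝ E] [ContinuousSMul ℝ E] {f : StrongDual ℝ E} (hf : f ≠ 0)
    {s : Set E} {c : ℝ} (hs : ∀ x ∈ s, f x ≤ c) {x : E} (hx : x ∈ interior s) : f x < c := by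
  have hx' : x ∈ interior (f ⁻¹' Iic c) := interior_mono hs hx
  rwa [← (f.isOpenMap_of_ne_zero hf).preimage_interior_eq_interior_preimage f.continuous,
    interior_Iic] at hx'

theorem eq_zero_or_eq_one_of_exists_intCast {x : ℝ} (hx : ∃ z : ℤ, x = z) (h0 : 0 ≤ x)
    (h1 : x ≤ 1) : x = 0 ∨ x = 1 := by
  obtain ⟨z, rfl⟩ := hx
  have : 0 ≤ z := by exact_mod_cast h0
  have : z ≤ 1 := by exact_mod_cast h1
  interval_cases z <;> simp

def latticePoints {n : ℕ} (s : Set (Fin n → ℝ)) : Set (Fin n → ℝ) :=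
  {x | x ∈ s ∧ ∀ i, ∃ z : ℤ, x i = z}

def reeveVertices (k : ℝ) : Set (Fin 3 → ℝ) :=
  {![0, 0, 0], ![1, 0, 0], ![0, 1, 0], ![1, 1, k]}

def reeveSimplex (k : ℝ) : Set (Fin 3 → ℝ) :=
  convexHull ℝ (reeveVertices k)

def reeveMap (k : ℝ) : (Fin 3 → ℝ) →ₗ[ℝ] (Fin 3 → ℝ) :=
  Matrix.toLin' !![k, 0, -1; 0, k, -1; 0, 0, 1]

theorem reeveMap_apply (k : ℝ) (x : Fin 3 → ℝ) :
    reeveMap k x = ![k * x 0 - x 2, k * x 1 - x 2, x 2] := by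
  ext i
  fin_cases i <;> simp [reeveMap, Matrix.mulVec, dotProduct, Fin.sum_univ_three, sub_eq_add_neg]

theorem det_reeveMap (k : ℝ) : LinearMap.det (reeveMap k) = k ^ 2 := by
  simp [reeveMap, Matrix.det_fin_three, sq]

section Reeve

variable {k : ℝ}

theorem reeveMap_mem_cornerSimplex_iff {x : Fin 3 → ℝ} :
    reeveMap k x ∈ cornerSimplex 3 k ↔
      0 ≤ x 2 ∧ x 2 ≤ k * x 0 ∧ x 2 ≤ k * x 1 ∧ k * (x 0 + x 1) - x 2 ≤ k := by
  simp only [cornerSimplex, mem_ofPred_eq, reeveMap_apply, Fin.forall_fin_succ, Fin.sum_univ_three,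
    Fin.isValue, Matrix.cons_val_zero, sub_nonneg, Fin.succ_zero_eq_one, Matrix.cons_val_one,
    Fin.succ_one_eq_two, Matrix.cons_val, IsEmpty.forall_iff, and_true, and_assoc]
  constructor
  · rintro ⟨hzx, hzy, hz, hsum⟩
    exact ⟨hz, hzx, hzy, by linarith⟩
  · rintro ⟨hz, hzx, hzy, hsum⟩
    exact ⟨hzx, hzy, hz, by linarith⟩

theorem reeveSimplex_eq_preimage (hk : 0 < k) :
    reeveSimplex k = reeveMap k ⁻¹' cornerSimplex 3 k := by
  apply Subset.antisymm
  · refine convexHull_min ?_ (cornerSimplex.convex.linear_preimage _)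
    simp [insert_subset_iff, reeveVertices, reeveMap_mem_cornerSimplex_iff, hk.le,
      one_add_one_eq_two, mul_two]
  · intro x hx
    obtain ⟨hz, hzx, hzy, hsum⟩ := reeveMap_mem_cornerSimplex_iff.1 hx
    let w : Fin 4 → ℝ :=
      ![(k - k * x 0 - k * x 1 + x 2) / k, (k * x 0 - x 2) / k, (k * x 1 - x 2) / k, x 2 / k]
    let v : Fin 4 → Fin 3 → ℝ := ![![0, 0, 0], ![1, 0, 0], ![0, 1, 0], ![1, 1, k]]
    have hw : ∀ i, 0 ≤ w i := by
      intro i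
      fin_cases i <;> exact div_nonneg (by linarith) hk.le
    have hw_sum : ∑ i, w i = 1 := by
      simp only [w, Fin.sum_univ_four, Matrix.cons_val_zero, Matrix.cons_val_one, Matrix.cons_val]
      field_simp
      ring
    have hwv : ∑ i, w i • v i = x := by
      ext j
      fin_cases j <;>
        simp only [w, v, Fin.zero_eta, Fin.mk_one, Fin.reduceFinMk, Finset.sum_apply, Pi.smul_apply,
          Matrix.cons_val', Matrix.cons_val_zero, Matrix.cons_val_one, Matrix.cons_val,
          Matrix.cons_val_fin_one, smul_eq_mul, Fin.sum_univ_four, mul_zero, mul_one, zero_add,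
          add_zero] <;>
        field_simp <;> ring
    rw [← hwv]
    refine (convex_convexHull ℝ _).sum_mem (fun i _ => hw i) hw_sum fun i _ => ?_
    apply subset_convexHull
    fin_cases i <;> simp [v, reeveVertices]

theorem mem_reeveSimplex_iff (hk : 0 < k) {x : Fin 3 → ℝ} :
    x ∈ reeveSimplex k ↔
      0 ≤ x 2 ∧ x 2 ≤ k * x 0 ∧ x 2 ≤ k * x 1 ∧ k * (x 0 + x 1) - x 2 ≤ k := by
  rw [reeveSimplex_eq_preimage hk, mem_preimage, reeveMap_mem_cornerSimplex_iff]

theorem volume_reeveSimplex (hk : 0 < k) : volume (reeveSimplex k) = ENNReal.ofReal (k / 6) := by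
  rw [reeveSimplex_eq_preimage hk,
    Measure.addHaar_preimage_linearMap _ (by simp [det_reeveMap, hk.ne']), det_reeveMap,
    volume_cornerSimplex 3 hk.le, ← ENNReal.ofReal_mul (abs_nonneg _),
    abs_of_pos (by positivity)]
  congr 1
  field_simp
  norm_num

theorem eq_vertex_of_mem_reeveSimplex (hk : 0 < k) {x : Fin 3 → ℝ} (hx : x ∈ reeveSimplex k)
    (h0 : ∃ z : ℤ, x 0 = z) (h1 : ∃ z : ℤ, x 1 = z) : x ∈ reeveVertices k := by
  obtain ⟨hz, hzx, hzy, hsum⟩ := (mem_reeveSimplex_iff hk).1 hx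
  have hx0 : 0 ≤ x 0 := nonneg_of_mul_nonneg_right (hz.trans hzx) hk
  have hy0 : 0 ≤ x 1 := nonneg_of_mul_nonneg_right (hz.trans hzy) hk
  have hx1 : x 0 ≤ 1 := le_of_mul_le_mul_left (by linarith) hk
  have hy1 : x 1 ≤ 1 := le_of_mul_le_mul_left (by linarith) hk
  have vec : ∀ a b c : ℝ, x 0 = a → x 1 = b → x 2 = c → x = ![a, b, c] := by
    intro a b c ha hb hc
    ext i
    fin_cases i <;> simp [ha, hb, hc]
  rcases eq_zero_or_eq_one_of_exists_intCast h0 hx0 hx1 with ha | ha <;>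
    rcases eq_zero_or_eq_one_of_exists_intCast h1 hy0 hy1 with hb | hb <;>
    simp only [reeveVertices, mem_insert_iff, mem_singleton_iff]
  · exact Or.inl (vec 0 0 0 ha hb (by rw [ha] at hzx; linarith))
  · exact Or.inr (Or.inr (Or.inl (vec 0 1 0 ha hb (by rw [ha] at hzx; linarith))))
  · exact Or.inr (Or.inl (vec 1 0 0 ha hb (by rw [hb] at hzy; linarith)))
  · refine Or.inr (Or.inr (Or.inr (vec 1 1 k ha hb ?_)))
    rw [ha] at hzx
    rw [ha, hb] at hsum
    linarith

theorem latticePoints_reeveSimplex (hk : 0 < k) (hkZ : ∃ z : ℤ, k = z) :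
    latticePoints (reeveSimplex k) = reeveVertices k := by
  apply Subset.antisymm
  · rintro x ⟨hx, hint⟩
    exact eq_vertex_of_mem_reeveSimplex hk hx (hint 0) (hint 1)
  · intro x hx
    refine ⟨subset_convexHull ℝ _ hx, ?_⟩
    obtain ⟨m, rfl⟩ := hkZ
    have h0 : ∃ z : ℤ, (0 : ℝ) = z := ⟨0, Int.cast_zero.symm⟩
    have h1 : ∃ z : ℤ, (1 : ℝ) = z := ⟨1, Int.cast_one.symm⟩
    rcases hx with rfl | rfl | rfl | rfl <;> simp [Fin.forall_fin_succ, h0, h1]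

theorem latticePoints_interior_reeveSimplex (hk : 0 < k) :
    latticePoints (interior (reeveSimplex k)) = ∅ := by
  refine eq_empty_of_forall_notMem fun x ⟨hx, hint⟩ => ?_
  have hbot : -x 2 < 0 := by
    refine lt_of_mem_interior_of_forall_le (f := -ContinuousLinearMap.proj 2)
      (DFunLike.ne_iff.2 ⟨Pi.single 2 1, by simp⟩) (fun y hy => ?_) hx
    simpa using ((mem_reeveSimplex_iff hk).1 hy).1
  have htop : k * x 0 + k * x 1 - x 2 < k := by
    refine lt_of_mem_interior_of_forall_le
      (f := k • ContinuousLinearMap.proj 0 + k • ContinuousLinearMap.proj 1 -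
        ContinuousLinearMap.proj 2)
      (DFunLike.ne_iff.2 ⟨Pi.single 2 1, by simp⟩) (fun y hy => ?_) hx
    simp only [sub_apply, add_apply, smul_apply, ContinuousLinearMap.proj_apply, smul_eq_mul]
    linarith [((mem_reeveSimplex_iff hk).1 hy).2.2.2]
  rcases eq_vertex_of_mem_reeveSimplex hk (interior_subset hx) (hint 0) (hint 1) with
    rfl | rfl | rfl | rfl <;> simp at hbot htop

end Reeve

/-- The Reeve simplex `T(k) = conv{0, e₁, e₂, (1,1,k)}` has volume `k/6`,
its only lattice points are its four vertices, and in particular it has no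
interior lattice points. -/
theorem reeve_simplex_properties (k : ℕ) (hk : 1 ≤ k) :
    volume (convexHull ℝ
        ({![0, 0, 0], ![1, 0, 0], ![0, 1, 0], ![1, 1, (k : ℝ)]} :
          Set (Fin 3 → ℝ))) = ENNReal.ofReal ((k : ℝ) / 6) ∧
    {x : Fin 3 → ℝ |
        x ∈ convexHull ℝ
          ({![0, 0, 0], ![1, 0, 0], ![0, 1, 0], ![1, 1, (k : ℝ)]} :
            Set (Fin 3 → ℝ)) ∧ ∀ i, ∃ z : ℤ, x i = z} =
      {![0, 0, 0], ![1, 0, 0], ![0, 1, 0], ![1, 1, (k : ℝ)]} ∧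
    {x : Fin 3 → ℝ |
        x ∈ interior (convexHull ℝ
          ({![0, 0, 0], ![1, 0, 0], ![0, 1, 0], ![1, 1, (k : ℝ)]} :
            Set (Fin 3 → ℝ))) ∧ ∀ i, ∃ z : ℤ, x i = z} = ∅ := by
  have hk' : (0 : ℝ) < k := by exact_mod_cast hk
  exact ⟨volume_reeveSimplex hk', latticePoints_reeveSimplex hk' ⟨k, by simp⟩,
    latticePoints_interior_reeveSimplex hk'⟩
end
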